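/- Let q be a prime power. For even n = 2m ≥ 4, the number of orbits of PGL_2(F_q) acting diagonally on the set C_n of n-tuples of points of P^1(F_q) with cyclically adjacent points distinct is 1 + q·[m-1]_{q^2}, where [j]_{q^2} = (q^{2j}-1)/(q^2-1). -/

import Mathlib

/-!
`GL₂(K)` acts on `cycConfig K n` with the same orbits as `PGL₂(K)`. The only automorphisms
fixing three distinct points of `ℙ¹(K)` are the scalars, so a configuration taking three
distinct values has an orbit of size `|GL₂(K)| / (q - 1) = q (q² - 1)`. Every other
configuration alternates `a, b, a, b, …`, and these form a single orbit of size `(q + 1) q` by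
2-transitivity. Since there are `q ^ n + q` configurations in all (the chromatic polynomial of
the `n`-cycle at `q + 1` colours), the number `N` of orbits satisfies
`q ^ n + q = (q + 1) q + q (q² - 1) (N - 1)`, and solving for `N` gives the formula.
-/

open Finset
open scoped LinearAlgebra.Projectivization

/-- The cyclic successor of `i : Fin n`. -/
def cycSucc {n : ℕ} (i : Fin n) : Fin n := ⟨(i.1 + 1) % n, Nat.mod_lt _ i.pos⟩

/-- Cyclic configurations of `n` points of `ℙ¹(K)` with cyclically adjacent points distinct. -/
def cycConfig (K : Type*) [Field K] (n : ℕ) : Set (Fin n → ℙ K (Fin 2 → K)) :=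
  {v | ∀ i, v i ≠ v (cycSucc i)}

/-- Two cyclic configurations are related iff some projective linear transformation
(induced by a linear automorphism of `K²`, i.e. an element of `PGL₂(K)`) maps one
to the other. -/
def pglRel (K : Type*) [Field K] (n : ℕ) (x y : cycConfig K n) : Prop :=
  ∃ g : (Fin 2 → K) ≃ₗ[K] (Fin 2 → K),
    ∀ i, Projectivization.map g.toLinearMap g.injective ((x : Fin n → ℙ K (Fin 2 → K)) i)
      = (y : Fin n → ℙ K (Fin 2 → K)) i

open MulAction

lemma Nat.card_subtype_ne {α : Type*} [Finite α] (a : α) :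
    Nat.card {b // b ≠ a} = Nat.card α - 1 := by
  rw [← Set.ncard_singleton a, ← Set.ncard_compl]
  rfl

section Colorings

variable {α : Type*}

def cycleColorings (α : Type*) (n : ℕ) : Set (Fin n → α) :=
  {v | ∀ i, v i ≠ v (cycSucc i)}

/-- Colourings of the path with `n` edges, hence `n + 1` vertices. -/
def pathColorings (α : Type*) (n : ℕ) : Set (Fin (n + 1) → α) :=
  {v | ∀ i : Fin n, v i.castSucc ≠ v i.succ}

lemma cycSucc_castSucc {n : ℕ} (i : Fin n) : cycSucc i.castSucc = i.succ :=
  Fin.ext (Nat.mod_eq_of_lt (Nat.succ_lt_succ i.isLt))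

lemma cycSucc_last (n : ℕ) : cycSucc (Fin.last n) = 0 :=
  Fin.ext (Nat.mod_self _)

lemma mem_cycleColorings_succ_iff {n : ℕ} {v : Fin (n + 1) → α} :
    v ∈ cycleColorings α (n + 1) ↔ v ∈ pathColorings α n ∧ v (Fin.last n) ≠ v 0 := by
  simp only [cycleColorings, pathColorings, Set.mem_ofPred_eq, Fin.forall_fin_succ',
    cycSucc_castSucc, cycSucc_last]

def pathColoringsSuccEquiv (n : ℕ) :
    pathColorings α (n + 1) ≃ Σ w : pathColorings α n, {b : α // b ≠ w.1 (Fin.last n)} where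
  toFun v := ⟨⟨Fin.init v.1, fun i => v.2 i.castSucc⟩, ⟨v.1 (Fin.last _), by
    simpa [Fin.init] using (v.2 (Fin.last n)).symm⟩⟩
  invFun w := ⟨Fin.snoc w.1.1 w.2.1, Fin.lastCases (by simpa using w.2.2.symm) fun i => by
    rw [Fin.succ_castSucc, Fin.snoc_castSucc, Fin.snoc_castSucc]
    exact w.1.2 i⟩
  left_inv v := by simp
  right_inv w := Sigma.subtype_ext (Subtype.ext (Fin.init_snoc (α := fun _ => α) _ _))
    (Fin.snoc_last (α := fun _ => α) _ _)

lemma card_pathColorings [Finite α] (n : ℕ) :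
    Nat.card (pathColorings α n) = Nat.card α * (Nat.card α - 1) ^ n := by
  induction n with
  | zero => simp [pathColorings, Nat.card_fun]
  | succ n ih =>
    have := Fintype.ofFinite (pathColorings α n)
    rw [Nat.card_congr (pathColoringsSuccEquiv n), Nat.card_sigma]
    simp only [Nat.card_subtype_ne, Finset.sum_const, Finset.card_univ,
      ← Nat.card_eq_fintype_card, ih, smul_eq_mul, pow_succ, mul_assoc]

def cycleColoringsEquivClosedPaths (n : ℕ) :
    cycleColorings α (n + 1) ≃ {v : pathColorings α (n + 1) // v.1 (Fin.last _) = v.1 0} where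
  toFun w := ⟨⟨Fin.snoc w.1 (w.1 0), Fin.lastCases
      (by simpa [Fin.init] using (mem_cycleColorings_succ_iff.1 w.2).2) fun i => by
        rw [Fin.succ_castSucc, Fin.snoc_castSucc, Fin.snoc_castSucc]
        exact (mem_cycleColorings_succ_iff.1 w.2).1 i⟩, by simp⟩
  invFun v := ⟨Fin.init v.1.1, mem_cycleColorings_succ_iff.2
    ⟨fun i => v.1.2 i.castSucc, by simpa [Fin.init, v.2] using v.1.2 (Fin.last n)⟩⟩
  left_inv w := Subtype.ext (Fin.init_snoc (α := fun _ => α) _ _)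
  right_inv v := by
    refine Subtype.ext (Subtype.ext ?_)
    conv_rhs => rw [← Fin.snoc_init_self v.1.1]
    simp [Fin.init, v.2]

lemma card_pathColorings_eq_add [Finite α] (n : ℕ) :
    Nat.card (pathColorings α (n + 1)) =
      Nat.card (cycleColorings α (n + 2)) + Nat.card (cycleColorings α (n + 1)) := by
  classical
  rw [← Nat.card_congr (Equiv.sumCompl fun v : pathColorings α (n + 1) => v.1 (Fin.last _) = v.1 0),
    Nat.card_sum, add_comm, Nat.card_congr (cycleColoringsEquivClosedPaths n).symm]
  congr 1
  exact Nat.card_congr ((Equiv.subtypeSubtypeEquivSubtypeInter _ _).trans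
    (Equiv.subtypeEquivRight fun v => mem_cycleColorings_succ_iff.symm))

lemma card_cycleColorings {q : ℕ} (hq : Nat.card α = q + 1) (n : ℕ) :
    (Nat.card (cycleColorings α (n + 1)) : ℤ) = q ^ (n + 1) + (-1) ^ (n + 1) * q := by
  have : Finite α := Nat.finite_of_card_ne_zero (by omega)
  induction n with
  | zero =>
    have : IsEmpty (cycleColorings α 1) :=
      ⟨fun v => v.2 0 (congrArg v.1 (Subsingleton.elim _ _))⟩
    simp
  | succ n ih =>
    have h := card_pathColorings_eq_add (α := α) n
    rw [card_pathColorings, hq, Nat.add_sub_cancel] at h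
    zify at h
    linear_combination -h - ih

end Colorings

section Alternating

variable {α : Type*}

def altTuple (n : ℕ) (a b : α) : Fin n → α := fun i => if Even (i : ℕ) then a else b

lemma even_cycSucc_iff {n : ℕ} (hn : Even n) (i : Fin n) :
    Even (cycSucc i : ℕ) ↔ ¬Even (i : ℕ) := by
  rw [cycSucc, Nat.even_iff, Nat.mod_mod_of_dvd _ hn.two_dvd, ← Nat.even_iff, Nat.even_add_one]

lemma altTuple_mem_cycleColorings {n : ℕ} (hn : Even n) {a b : α} (hab : a ≠ b) :
    altTuple n a b ∈ cycleColorings α n := by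
  intro i
  by_cases hi : Even (i : ℕ) <;> simp [altTuple, even_cycSucc_iff hn, hi, hab, hab.symm]

lemma eq_altTuple_of_forall_eq_or_eq {n : ℕ} [NeZero n] {v : Fin n → α}
    (hv : v ∈ cycleColorings α n) {b : α} (h : ∀ i, v i = v 0 ∨ v i = b) :
    v = altTuple n (v 0) b := by
  suffices ∀ k (hk : k < n), v ⟨k, hk⟩ = if Even k then v 0 else b from
    funext fun i => this i i.isLt
  intro k
  induction k with
  | zero => intro hk; rfl
  | succ k ih =>
    intro hk
    have hne : v ⟨k, by omega⟩ ≠ v ⟨k + 1, hk⟩ := by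
      simpa [cycSucc, Nat.mod_eq_of_lt hk] using hv ⟨k, by omega⟩
    rw [ih (by omega)] at hne
    rcases h ⟨k + 1, hk⟩ with h | h <;> by_cases hk : Even k <;>
      simp_all [Nat.even_add_one]

lemma smul_altTuple {G : Type*} [SMul G α] (g : G) (n : ℕ) (a b : α) :
    g • altTuple n a b = altTuple n (g • a) (g • b) := by
  funext i
  simp only [altTuple, Pi.smul_apply]
  split_ifs <;> rfl

variable {G : Type*} [Group G] [MulAction G α] [IsMultiplyPretransitive G α 2]

lemma orbit_altTuple (n : ℕ) {a b : α} (hab : a ≠ b) :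
    orbit G (altTuple n a b) = Set.range fun p : Σ c : α, {d // d ≠ c} => altTuple n p.1 p.2 := by
  ext v
  constructor
  · rintro ⟨g, rfl⟩
    exact ⟨⟨g • a, g • b, (MulAction.injective g).ne hab.symm⟩, (smul_altTuple g n a b).symm⟩
  · rintro ⟨⟨c, d, hdc⟩, rfl⟩
    obtain ⟨g, rfl, rfl⟩ := is_two_pretransitive_iff.1 ‹_› hab hdc.symm
    exact ⟨g, smul_altTuple g n a b⟩

lemma altTuple_injective {n : ℕ} (hn : 2 ≤ n) :
    Function.Injective fun p : Σ c : α, {d // d ≠ c} => altTuple n p.1 p.2 := by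
  rintro ⟨a, b, hb⟩ ⟨a', b', hb'⟩ h
  have h0 := congrFun h ⟨0, by omega⟩
  have h1 := congrFun h ⟨1, by omega⟩
  simp only [altTuple, Even.zero, Nat.not_even_one, if_true, if_false] at h0 h1
  subst h0 h1
  rfl

lemma card_orbit_altTuple [Finite α] {n : ℕ} (hn : 2 ≤ n) {a b : α} (hab : a ≠ b) :
    Nat.card (orbit G (altTuple n a b)) = Nat.card α * (Nat.card α - 1) := by
  have := Fintype.ofFinite α
  rw [orbit_altTuple n hab, Nat.card_range_of_injective (altTuple_injective hn), Nat.card_sigma]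
  simp [Nat.card_subtype_ne]

lemma exists_three_ne_of_notMem_orbit_altTuple {n : ℕ} [NeZero n] {a b : α} (hab : a ≠ b)
    {v : Fin n → α} (hv : v ∈ cycleColorings α n) (hvo : v ∉ orbit G (altTuple n a b)) :
    ∃ i j k, v i ≠ v j ∧ v i ≠ v k ∧ v j ≠ v k := by
  by_contra! h
  refine hvo ?_
  rw [eq_altTuple_of_forall_eq_or_eq hv (b := v (cycSucc 0)) fun i => ?_, orbit_altTuple n hab]
  · exact ⟨⟨v 0, v (cycSucc 0), (hv 0).symm⟩, rfl⟩
  · by_contra! hi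
    exact hi.2 (h 0 (cycSucc 0) i (hv 0) (Ne.symm hi.1)).symm

end Alternating

namespace Projectivization

variable {K V : Type*} [Field K] [AddCommGroup V] [Module K V]

lemma smul_eq_self_iff (g : V ≃ₗ[K] V) (p : ℙ K V) :
    g • p = p ↔ ∃ s : K, g p.rep = s • p.rep := by
  conv_lhs => rw [← mk_rep p]
  simp only [smul_mk, mk_eq_mk_iff', LinearEquiv.smul_def]
  exact exists_congr fun _ => eq_comm

/-- With `a, b` spanned by eigenvectors `x, y`, the third point is `[α x + β y]` with `α, β ≠ 0`,
and being an eigenvector forces the eigenvalues of `x` and `y` to agree. -/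
theorem exists_eq_smul_of_smul_eq_self (hV : Module.finrank K V = 2) {g : V ≃ₗ[K] V}
    {a b c : ℙ K V} (hab : a ≠ b) (hac : a ≠ c) (hbc : b ≠ c)
    (ha : g • a = a) (hb : g • b = b) (hc : g • c = c) : ∃ s : K, ∀ v, g v = s • v := by
  obtain ⟨s, hs⟩ := (smul_eq_self_iff g a).1 ha
  obtain ⟨t, ht⟩ := (smul_eq_self_iff g b).1 hb
  obtain ⟨u, hu⟩ := (smul_eq_self_iff g c).1 hc
  have hli := linearIndependent_pair_iff_ne.2 hab
  have hspan : ∀ w, w ∈ Submodule.span K {b.rep, a.rep} := by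
    have := hli.span_eq_top_of_card_eq_finrank (by simp [hV])
    simp_all
  obtain ⟨β, α, hz⟩ := Submodule.mem_span_pair.1 (hspan c.rep)
  have hα : α ≠ 0 := by
    rintro rfl
    rw [zero_smul, add_zero] at hz
    have := (LinearIndependent.pair_iff.1 (linearIndependent_pair_iff_ne.2 hbc) β (-1)
      (by rw [← hz]; simp)).2
    exact neg_ne_zero.2 one_ne_zero this
  have hβ : β ≠ 0 := by
    rintro rfl
    rw [zero_smul, zero_add] at hz
    have := (LinearIndependent.pair_iff.1 (linearIndependent_pair_iff_ne.2 hac) α (-1)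
      (by rw [← hz]; simp)).2
    exact neg_ne_zero.2 one_ne_zero this
  rw [← hz, map_add, map_smul, map_smul, hs, ht] at hu
  obtain ⟨hsu, htu⟩ := LinearIndependent.pair_iff.1 hli (α * (s - u)) (β * (t - u))
    (by linear_combination (norm := module) hu)
  obtain rfl : s = u := sub_eq_zero.1 ((mul_eq_zero.1 hsu).resolve_left hα)
  obtain rfl : t = s := sub_eq_zero.1 ((mul_eq_zero.1 htu).resolve_left hβ)
  refine ⟨t, fun w => ?_⟩
  obtain ⟨γ, δ, rfl⟩ := Submodule.mem_span_pair.1 (hspan w)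
  rw [map_add, map_smul, map_smul, hs, ht]
  module

lemma stabilizer_eq_range_toModuleAut (hV : Module.finrank K V = 2) {n : ℕ}
    {v : Fin n → ℙ K V} {i j k : Fin n} (hij : v i ≠ v j) (hik : v i ≠ v k) (hjk : v j ≠ v k) :
    stabilizer (V ≃ₗ[K] V) v = (DistribMulAction.toModuleAut K (S := Kˣ) V).range := by
  ext g
  rw [mem_stabilizer_iff, MonoidHom.mem_range]
  constructor
  · intro hg
    have hfix l : g • v l = v l := congrFun hg l
    obtain ⟨s, hs⟩ := exists_eq_smul_of_smul_eq_self hV hij hik hjk (hfix i) (hfix j) (hfix k)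
    have hs0 : s ≠ 0 := by
      rintro rfl
      exact (v i).rep_nonzero (g.injective (by simp [hs]))
    exact ⟨Units.mk0 s hs0, LinearEquiv.ext fun w => (hs w).symm⟩
  · rintro ⟨u, rfl⟩
    funext l
    exact (smul_eq_self_iff _ _).2 ⟨u, rfl⟩

lemma card_stabilizer_of_ne (hV : Module.finrank K V = 2) {n : ℕ}
    {v : Fin n → ℙ K V} {i j k : Fin n} (hij : v i ≠ v j) (hik : v i ≠ v k) (hjk : v j ≠ v k) :
    Nat.card (stabilizer (V ≃ₗ[K] V) v) = Nat.card K - 1 := by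
  have hinj : Function.Injective (DistribMulAction.toModuleAut K (S := Kˣ) V) := fun u u' h =>
    Units.ext (smul_left_injective K (v i).rep_nonzero (LinearEquiv.congr_fun h (v i).rep))
  rw [stabilizer_eq_range_toModuleAut hV hij hik hjk,
    ← Nat.card_congr (MonoidHom.ofInjective hinj).toEquiv, Nat.card_units]

end Projectivization

section FiniteField

variable {K : Type*} [Field K] [Fintype K]

lemma card_projectiveLine : Nat.card (ℙ K (Fin 2 → K)) = Fintype.card K + 1 := by
  rw [Projectivization.card_of_finrank_two K _ (Module.finrank_fin_fun K),
    Nat.card_eq_fintype_card]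

lemma card_linearEquiv_fin_two :
    Nat.card ((Fin 2 → K) ≃ₗ[K] (Fin 2 → K)) =
      (Fintype.card K ^ 2 - 1) * (Fintype.card K ^ 2 - Fintype.card K) := by
  rw [← Nat.card_congr (Matrix.GeneralLinearGroup.toLin.trans
    (LinearMap.GeneralLinearGroup.generalLinearEquiv K (Fin 2 → K))).toEquiv,
    Matrix.card_GL_field, Fin.prod_univ_two]
  simp

lemma card_orbit_of_ne {n : ℕ} {v : Fin n → ℙ K (Fin 2 → K)} {i j k : Fin n}
    (hij : v i ≠ v j) (hik : v i ≠ v k) (hjk : v j ≠ v k) :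
    Nat.card (orbit ((Fin 2 → K) ≃ₗ[K] (Fin 2 → K)) v) =
      Fintype.card K * (Fintype.card K ^ 2 - 1) := by
  have h := Subgroup.card_mul_index (stabilizer ((Fin 2 → K) ≃ₗ[K] (Fin 2 → K)) v)
  rw [index_stabilizer, ← Nat.card_coe_set_eq,
    Projectivization.card_stabilizer_of_ne (Module.finrank_fin_fun K) hij hik hjk,
    card_linearEquiv_fin_two, Nat.card_eq_fintype_card, sq, ← Nat.mul_sub_one, ← sq] at h
  refine Nat.eq_of_mul_eq_mul_left (Nat.sub_pos_of_lt (Fintype.one_lt_card (α := K))) ?_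
  rw [h]
  ring

end FiniteField

/-- Stated with `N` added on both sides to avoid truncated subtraction. -/
theorem MulAction.card_add_eq_card_orbit_add_mul {G X : Type*} [Group G] [MulAction G X]
    [Finite X] (x₀ : X) {N : ℕ} (hN : ∀ x, x ∉ orbit G x₀ → Nat.card (orbit G x) = N) :
    Nat.card X + N = Nat.card (orbit G x₀) + N * Nat.card (orbitRel.Quotient G X) := by
  classical
  have := Fintype.ofFinite (orbitRel.Quotient G X)
  set ω₀ : orbitRel.Quotient G X := Quotient.mk _ x₀
  rw [Nat.card_congr (selfEquivSigmaOrbits G X), Nat.card_sigma,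
    ← Finset.add_sum_erase _ _ (Finset.mem_univ ω₀),
    orbit_eq_iff.2 (Quotient.mk_out (s := orbitRel G X) x₀),
    Nat.card_eq_fintype_card (α := orbitRel.Quotient G X),
    ← Finset.card_univ, ← Finset.card_erase_add_one (Finset.mem_univ ω₀),
    Finset.sum_congr rfl fun ω hω => hN _ fun h => (Finset.mem_erase.1 hω).1 ?_,
    Finset.sum_const, smul_eq_mul]
  · ring
  · rw [← Quotient.out_eq ω]
    exact Quotient.sound h

lemma SubMulAction.card_orbit {G X : Type*} [Group G] [MulAction G X] {p : SubMulAction G X}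
    (x : p) : Nat.card (orbit G x) = Nat.card (orbit G (x : X)) := by
  rw [← SubMulAction.val_image_orbit, Nat.card_image_of_injective Subtype.val_injective]

section CycConfig

variable (K : Type*) [Field K]

lemma cycConfig_eq_cycleColorings (n : ℕ) :
    cycConfig K n = cycleColorings (ℙ K (Fin 2 → K)) n :=
  rfl

def cycConfigSubMulAction (n : ℕ) :
    SubMulAction ((Fin 2 → K) ≃ₗ[K] (Fin 2 → K)) (Fin n → ℙ K (Fin 2 → K)) where
  carrier := cycConfig K n
  smul_mem' g _ hv i := (MulAction.injective g).ne (hv i)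

lemma card_quot_pglRel (n : ℕ) :
    Nat.card (Quot (pglRel K n)) = Nat.card
      (orbitRel.Quotient ((Fin 2 → K) ≃ₗ[K] (Fin 2 → K)) (cycConfigSubMulAction K n)) := by
  refine Nat.card_congr (Quot.congr (Equiv.subtypeEquivRight fun _ => Iff.rfl) fun x y => ?_)
  rw [orbitRel_apply, mem_orbit_symm]
  simp only [pglRel, mem_orbit_iff, Subtype.ext_iff, funext_iff]
  rfl

variable [Fintype K]

lemma card_cycConfig {n : ℕ} (hn : Even n) (hn0 : n ≠ 0) :
    (Nat.card (cycConfig K n) : ℤ) = Fintype.card K ^ n + Fintype.card K := by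
  obtain ⟨k, rfl⟩ : ∃ k, n = k + 1 := ⟨n - 1, by omega⟩
  rw [cycConfig_eq_cycleColorings]
  have := card_cycleColorings (card_projectiveLine (K := K)) k
  rwa [hn.neg_one_pow, one_mul] at this

theorem card_cycConfig_add_eq {n : ℕ} (hn : Even n) (hn2 : 2 ≤ n) :
    Nat.card (cycConfig K n) + Fintype.card K * (Fintype.card K ^ 2 - 1) =
      (Fintype.card K + 1) * Fintype.card K +
        Fintype.card K * (Fintype.card K ^ 2 - 1) * Nat.card (Quot (pglRel K n)) := by
  have : NeZero n := ⟨by omega⟩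
  have hP := card_projectiveLine (K := K)
  obtain ⟨a, b, hab⟩ : ∃ a b : ℙ K (Fin 2 → K), a ≠ b :=
    (Finite.one_lt_card_iff_nontrivial.1 (by rw [hP]; simp [Fintype.card_pos])).exists_pair_ne
  let x₀ : cycConfigSubMulAction K n := ⟨altTuple n a b, altTuple_mem_cycleColorings hn hab⟩
  have h₀ : Nat.card (orbit ((Fin 2 → K) ≃ₗ[K] (Fin 2 → K)) x₀) =
      (Fintype.card K + 1) * Fintype.card K := by
    rw [SubMulAction.card_orbit, card_orbit_altTuple hn2 hab, hP, Nat.add_sub_cancel]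
  rw [card_quot_pglRel, ← h₀]
  refine card_add_eq_card_orbit_add_mul x₀ fun x hx => ?_
  rw [SubMulAction.mem_orbit_subMul_iff] at hx
  obtain ⟨i, j, k, hij, hik, hjk⟩ := exists_three_ne_of_notMem_orbit_altTuple hab x.2 hx
  rw [SubMulAction.card_orbit, card_orbit_of_ne hij hik hjk]

end CycConfig

theorem card_orbits_cycConfig_even (K : Type*) [Field K] [Fintype K]
    (m : ℕ) (hm : 2 ≤ m) :
    Nat.card (Quot (pglRel K (2 * m))) =
      1 + Fintype.card K * ∑ i ∈ range (m - 1), Fintype.card K ^ (2 * i) := by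
  have hcount := card_cycConfig_add_eq K (even_two_mul m) (by omega)
  have hcard := card_cycConfig K (even_two_mul m) (by omega)
  set q := Fintype.card K
  have hq : (1 : ℤ) < q := by exact_mod_cast Fintype.one_lt_card (α := K)
  zify [Nat.one_le_pow 2 q Fintype.card_pos] at hcount
  have hgeom : (∑ i ∈ range (m - 1), (q : ℤ) ^ (2 * i)) * (q ^ 2 - 1) =
      q ^ (2 * (m - 1)) - 1 := by
    simpa [pow_mul] using geom_sum_mul ((q : ℤ) ^ 2) (m - 1)
  have hpow : (q : ℤ) ^ (2 * m) = q ^ 2 * q ^ (2 * (m - 1)) := by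
    rw [← pow_add]
    congr 1
    omega
  have hfactor : ((q : ℤ) * (q ^ 2 - 1)) * (Nat.card (Quot (pglRel K (2 * m))) -
      (1 + q * ∑ i ∈ range (m - 1), (q : ℤ) ^ (2 * i))) = 0 := by
    linear_combination -hcount - (q : ℤ) ^ 2 * hgeom + hcard + hpow
  have hne : (q : ℤ) * (q ^ 2 - 1) ≠ 0 := by nlinarith
  exact_mod_cast sub_eq_zero.1 ((mul_eq_zero.1 hfactor).resolve_left hne)
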